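/- Let R be a Noetherian ring, I an ideal, M a finitely generated R-module, f ∈ R. Suppose multiplication by f is injective on M / Γ_I(M). Then for all sufficiently large n, multiplication by f maps I^n M injectively into I^n M, i.e., (0 :_{I^n M} f) = 0. -/

import Mathlib

/-!
The kernel of `f` on `M` lies in `Γ_I(M)`, which for Noetherian `M` equals `(0 :_M I^k)` for
some `k`. By Artin–Rees, `I^n M ∩ Γ_I(M) ⊆ I^(n-c) Γ_I(M)`, which is killed once `n - c ≥ k`.
-/

/-- The `I`-torsion submodule `Γ_I(M) = ⋃ n, (0 :_M I^n)`. -/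
noncomputable def torsionGamma {R : Type*} [CommRing R] (I : Ideal R) (M : Type*)
    [AddCommGroup M] [Module R M] : Submodule R M :=
  ⨆ n : ℕ, Submodule.torsionBySet R M ((I ^ n : Ideal R) : Set R)

open Submodule

section
variable {R M : Type*} [CommRing R] [AddCommGroup M] [Module R M]

theorem smul_eq_bot_of_le_torsionBySet {J : Ideal R} {N : Submodule R M}
    (h : N ≤ torsionBySet R M J) : J • N = ⊥ :=
  eq_bot_iff.mpr <| smul_le.mpr fun r hr _ hx =>
    (mem_torsionBySet_iff _ _).mp (h hx) ⟨r, hr⟩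

theorem mem_of_smul_eq_zero_of_injective_smul_quotient {N : Submodule R M} {f : R}
    (hf : Function.Injective fun x : M ⧸ N => f • x) {x : M} (hx : f • x = 0) : x ∈ N :=
  (Quotient.mk_eq_zero N).mp <| hf <| by simp [← Quotient.mk_smul, hx]

theorem exists_torsionGamma_eq_torsionBySet_pow [IsNoetherian R M] (I : Ideal R) :
    ∃ k : ℕ, torsionGamma I M = torsionBySet R M ((I ^ k : Ideal R) : Set R) := by
  have mono : Monotone fun n : ℕ => torsionBySet R M ((I ^ n : Ideal R) : Set R) :=
    fun i j h => torsionBySet_le_torsionBySet_pow i j h I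
  obtain ⟨k, hk⟩ := monotone_stabilizes_iff_noetherian.mpr ‹_› ⟨_, mono⟩
  refine ⟨k, le_antisymm (iSup_le fun n => ?_) (le_iSup_of_le k le_rfl)⟩
  rcases le_total n k with h | h
  · exact mono h
  · exact (hk n h).ge

theorem exists_pow_smul_top_inf_torsionGamma_eq_bot [IsNoetherianRing R] [Module.Finite R M]
    (I : Ideal R) : ∃ n₀ : ℕ, ∀ n ≥ n₀, I ^ n • (⊤ : Submodule R M) ⊓ torsionGamma I M = ⊥ := by
  obtain ⟨k, hk⟩ := exists_torsionGamma_eq_torsionBySet_pow (M := M) I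
  obtain ⟨c, hc⟩ := I.exists_pow_inf_eq_pow_smul (torsionGamma I M)
  refine ⟨k + c, fun n hn => eq_bot_iff.mpr ?_⟩
  calc I ^ n • ⊤ ⊓ torsionGamma I M
      = I ^ (n - c) • (I ^ c • ⊤ ⊓ torsionGamma I M) := hc n (by omega)
    _ ≤ I ^ k • torsionGamma I M := smul_mono (Ideal.pow_le_pow_right (by omega)) inf_le_right
    _ = ⊥ := smul_eq_bot_of_le_torsionBySet hk.le

end

/-- If multiplication by `f` is injective on `M/Γ_I(M)`, then for all sufficiently
large `n`, multiplication by `f` is injective on `I^n • M`. -/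
theorem stmt_10 {R M : Type*} [CommRing R] [IsNoetherianRing R] [AddCommGroup M] [Module R M]
    [Module.Finite R M] (I : Ideal R) (f : R)
    (hf : Function.Injective (fun x : M ⧸ torsionGamma I M => f • x)) :
    ∃ n₀ : ℕ, ∀ n ≥ n₀, ∀ x ∈ (I ^ n • (⊤ : Submodule R M)), f • x = 0 → x = 0 := by
  obtain ⟨n₀, hn₀⟩ := exists_pow_smul_top_inf_torsionGamma_eq_bot (M := M) I
  refine ⟨n₀, fun n hn x hx hfx => ?_⟩
  have hx' : x ∈ I ^ n • ⊤ ⊓ torsionGamma I M :=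
    ⟨hx, mem_of_smul_eq_zero_of_injective_smul_quotient hf hfx⟩
  simpa [hn₀ n hn] using hx'
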